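/- Let x* minimize ½‖y − A x‖² + λ J(x) with J the SLOPE norm (weights w_1 > 0, w_1 ≥ ... ≥ w_n ≥ 0, λ > 0), and set u* = y − A x*. If x*_ℓ ≠ 0 for some ℓ, then there exists q₀ ∈ {1,...,n} such that |aₗᵀ u*| + Σ_{k=1}^{q₀−1} |A_{∖ℓ}ᵀ u*|_{[k]} = λ Σ_{k=1}^{q₀} w_k. -/

import Mathlib

open Finset Matrix

/-- `kth v k` is the `(k+1)`-th largest entry of `v` (zero-indexed: `kth v 0` is the largest). -/
noncomputable def kth {n : ℕ} (v : Fin n → ℝ) (k : ℕ) : ℝ :=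
  if h : k < n then v (Tuple.sort (fun i => -v i) ⟨k, h⟩) else 0

/-- `absKth v k` is the `(k+1)`-th largest absolute entry of `v` (zero-indexed). -/
noncomputable def absKth {n : ℕ} (v : Fin n → ℝ) (k : ℕ) : ℝ :=
  kth (fun i => |v i|) k

/-- The SLOPE (sorted-ℓ1) function with weights `w 0 ≥ w 1 ≥ …` (zero-indexed). -/
noncomputable def slopeNorm {n : ℕ} (w : ℕ → ℝ) (x : Fin n → ℝ) : ℝ :=
  ∑ k ∈ Finset.range n, w k * absKth x k

/-- Dual norm of a norm `J` on `ℝ^n`. -/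
noncomputable def dualNorm {n : ℕ} (J : (Fin n → ℝ) → ℝ) (g : Fin n → ℝ) : ℝ :=
  sSup {t : ℝ | ∃ x : Fin n → ℝ, J x ≤ 1 ∧ t = ∑ i, g i * x i}

/-- `dropIdx ℓ v` is the vector `v` deprived of its `ℓ`-th entry. -/
def dropIdx {n : ℕ} (ℓ : Fin n) (v : Fin n → ℝ) : Fin (n - 1) → ℝ :=
  fun j => if h : (j : ℕ) < (ℓ : ℕ) then v ⟨j, lt_trans h ℓ.isLt⟩
           else v ⟨(j : ℕ) + 1, by have := j.isLt; omega⟩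

/-!
Optimality of `x*` gives the subgradient inequality `g ⬝ᵥ d ≤ λ (J (x* + d) - J x*)` for
`g = Aᵀ u*`. With `d = -x*` it yields `λ J x* ≤ g ⬝ᵥ x*`; with `d` a sign vector supported on the
`p` largest entries of `|g|` it yields the dual-ball constraints
`∑_{k<p} |g|_[k] ≤ λ ∑_{k<p} w k`.

Abel summation along the sorted values `b k = |x*|_[k]` turns `λ J x* ≤ g ⬝ᵥ x*` into
`0 ≤ ∑ (b p - b (p+1)) (C (p+1) - λ W (p+1))`, where `C q` is the mass of `|g|` on the `q` largest
entries of `|x*|`; every term is `≤ 0`, so at each strict drop `b (p+1) < b p` the constraint is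
attained. Taking the last drop at or after the position of `ℓ`, these `p+1` entries contain `ℓ`
and realise the top `p+1` sum of `|g|`; splitting off `ℓ` gives the identity.
-/

open Filter Topology

section Summation

theorem sum_range_mul_by_parts (f g : ℕ → ℝ) (n : ℕ) :
    ∑ k ∈ range n, f k * g k =
      ∑ i ∈ range n, (f i - f (i + 1)) * ∑ k ∈ range (i + 1), g k +
        f n * ∑ k ∈ range n, g k := by
  induction n with
  | zero => simp
  | succ n ih =>
    rw [sum_range_succ, ih, sum_range_succ _ n, sum_range_succ g n]
    ring

theorem sum_range_succ_eq_of_sum_mul_le {n p : ℕ} {b c d : ℕ → ℝ} (hb : Antitone b)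
    (hbn : b n = 0) (hcd : ∀ q ≤ n, ∑ k ∈ range q, c k ≤ ∑ k ∈ range q, d k)
    (hbd : ∑ k ∈ range n, b k * d k ≤ ∑ k ∈ range n, b k * c k)
    (hp : p < n) (hbp : b (p + 1) < b p) :
    ∑ k ∈ range (p + 1), c k = ∑ k ∈ range (p + 1), d k := by
  set gap : ℕ → ℝ := fun i =>
    (b i - b (i + 1)) * (∑ k ∈ range (i + 1), c k - ∑ k ∈ range (i + 1), d k)
  have hgap : ∀ i ∈ range n, gap i ≤ 0 := fun i hi =>
    mul_nonpos_of_nonneg_of_nonpos (sub_nonneg.2 (hb i.le_succ))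
      (sub_nonpos.2 (hcd _ (mem_range.1 hi)))
  have hsum : ∑ i ∈ range n, gap i =
      ∑ k ∈ range n, b k * c k - ∑ k ∈ range n, b k * d k := by
    rw [← sum_sub_distrib]
    simpa [gap, hbn, mul_sub, sum_sub_distrib] using
      (sum_range_mul_by_parts b (fun k => c k - d k) n).symm
  have hzero := (sum_eq_zero_iff_of_nonpos hgap).1
    (le_antisymm (sum_nonpos hgap) (by linarith)) p (mem_range.2 hp)
  exact sub_eq_zero.1 ((mul_eq_zero.1 hzero).resolve_left (sub_ne_zero.2 hbp.ne'))

theorem exists_succ_lt_of_lt {α : Type*} [LinearOrder α] {b : ℕ → α} {j n : ℕ} (hjn : j ≤ n)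
    (h : b n < b j) : ∃ p, j ≤ p ∧ p < n ∧ b (p + 1) < b p := by
  by_contra! hmono
  have hle : ∀ q, j ≤ q → q ≤ n → b j ≤ b q := by
    intro q hjq hqn
    induction q, hjq using Nat.le_induction with
    | base => exact le_rfl
    | succ q hjq ih => exact (ih (by omega)).trans (hmono q hjq (by omega))
  exact (hle n hjn le_rfl).not_gt h

theorem Antitone.sum_le_sum_range_card {M : Type*} [AddCommMonoid M] [PartialOrder M]
    [IsOrderedAddMonoid M] {a : ℕ → M} (ha : Antitone a) (T : Finset ℕ) :
    ∑ k ∈ T, a k ≤ ∑ k ∈ range #T, a k := by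
  induction T using Finset.induction_on_max with
  | empty => simp
  | insert M T hlt ih =>
    have hM : M ∉ T := fun h => lt_irrefl M (hlt M h)
    have hcard : #T ≤ M := by
      simpa using card_le_card (show T ⊆ range M from fun x hx => mem_range.2 (hlt x hx))
    rw [sum_insert hM, card_insert_of_notMem hM, sum_range_succ, add_comm]
    exact add_le_add ih (ha hcard)

end Summation

section Sorted

variable {n : ℕ}

def sortedBy (σ : Equiv.Perm (Fin n)) (f : Fin n → ℝ) (k : ℕ) : ℝ :=
  if h : k < n then f (σ ⟨k, h⟩) else 0

def sortedPrefix (σ : Equiv.Perm (Fin n)) (p : ℕ) : Finset (Fin n) :=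
  ({k : Fin n | (k : ℕ) < p} : Finset (Fin n)).map σ.toEmbedding

@[simp]
theorem sortedBy_val (σ : Equiv.Perm (Fin n)) (f : Fin n → ℝ) (k : Fin n) :
    sortedBy σ f k = f (σ k) := by
  simp [sortedBy]

theorem sortedBy_of_le (σ : Equiv.Perm (Fin n)) (f : Fin n → ℝ) {k : ℕ} (hk : n ≤ k) :
    sortedBy σ f k = 0 := by
  simp [sortedBy, not_lt.2 hk]

theorem mem_sortedPrefix {σ : Equiv.Perm (Fin n)} {p : ℕ} {i : Fin n} :
    i ∈ sortedPrefix σ p ↔ (σ.symm i : ℕ) < p := by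
  simp [sortedPrefix, mem_map_equiv]

theorem card_sortedPrefix (σ : Equiv.Perm (Fin n)) (p : ℕ) : #(sortedPrefix σ p) = min n p := by
  simp [sortedPrefix, Fin.card_filter_val_lt]

theorem sum_sortedPrefix (σ : Equiv.Perm (Fin n)) (f : Fin n → ℝ) (p : ℕ) :
    ∑ i ∈ sortedPrefix σ p, f i = ∑ k ∈ range p, sortedBy σ f k := by
  calc ∑ i ∈ sortedPrefix σ p, f i
      = ∑ k : Fin n, (fun k : ℕ => if k < p then sortedBy σ f k else 0) k := by
        simp [sortedPrefix, sum_filter]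
    _ = ∑ k ∈ range p, sortedBy σ f k := by
        rw [Fin.sum_univ_eq_sum_range (fun k => if k < p then sortedBy σ f k else 0), ← sum_filter]
        refine sum_subset (fun k => by simp +contextual) fun k hk hkn => ?_
        exact sortedBy_of_le σ f (by simp_all)

theorem sum_mul_eq_sum_range_sortedBy (σ : Equiv.Perm (Fin n)) (f g : Fin n → ℝ) :
    ∑ i, f i * g i = ∑ k ∈ range n, sortedBy σ f k * sortedBy σ g k := by
  rw [← Equiv.sum_comp σ, ← Fin.sum_univ_eq_sum_range]
  simp

end Sorted

section TopSum

variable {n : ℕ}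

noncomputable def absSort (v : Fin n → ℝ) : Equiv.Perm (Fin n) :=
  Tuple.sort fun i => -|v i|

theorem absKth_eq_sortedBy (v : Fin n → ℝ) : absKth v = sortedBy (absSort v) fun i => |v i| :=
  rfl

theorem absKth_of_le (v : Fin n → ℝ) {k : ℕ} (hk : n ≤ k) : absKth v k = 0 := by
  rw [absKth_eq_sortedBy, sortedBy_of_le _ _ hk]

theorem absKth_nonneg (v : Fin n → ℝ) (k : ℕ) : 0 ≤ absKth v k := by
  rw [absKth_eq_sortedBy, sortedBy]
  split_ifs <;> positivity

theorem absKth_le_of_forall_abs_le {v : Fin n → ℝ} {a : ℝ} (h : ∀ i, |v i| ≤ a) (ha : 0 ≤ a)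
    (k : ℕ) : absKth v k ≤ a := by
  rw [absKth_eq_sortedBy, sortedBy]
  split_ifs
  exacts [h _, ha]

theorem absKth_antitone (v : Fin n → ℝ) : Antitone (absKth v) := by
  intro i j hij
  by_cases hj : j < n
  · have hsort := Tuple.monotone_sort (fun i => -|v i|) (a := ⟨i, hij.trans_lt hj⟩) (b := ⟨j, hj⟩)
      (by simpa using hij)
    simp only [Function.comp] at hsort
    simp only [absKth_eq_sortedBy, sortedBy, dif_pos hj, dif_pos (hij.trans_lt hj), absSort]
    linarith
  · rw [absKth_of_le v (not_lt.1 hj)]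
    exact absKth_nonneg v i

noncomputable def topSum (v : Fin n → ℝ) (p : ℕ) : ℝ :=
  ∑ k ∈ range p, absKth v k

theorem absKth_eq_topSum_sub (v : Fin n → ℝ) (k : ℕ) :
    absKth v k = topSum v (k + 1) - topSum v k := by
  simp [topSum, sum_range_succ]

theorem topSum_mono (v : Fin n → ℝ) : Monotone (topSum v) := fun _ _ h =>
  sum_le_sum_of_subset_of_nonneg (range_subset_range.2 h) fun k _ _ => absKth_nonneg v k

theorem sum_sortedPrefix_absSort (v : Fin n → ℝ) (p : ℕ) :
    ∑ i ∈ sortedPrefix (absSort v) p, |v i| = topSum v p :=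
  sum_sortedPrefix _ _ p

theorem exists_card_le_sum_abs_eq_topSum (v : Fin n → ℝ) (p : ℕ) :
    ∃ S : Finset (Fin n), #S ≤ p ∧ ∑ i ∈ S, |v i| = topSum v p :=
  ⟨_, (card_sortedPrefix _ p).trans_le (min_le_right n p), sum_sortedPrefix_absSort v p⟩

theorem sum_abs_le_topSum (v : Fin n → ℝ) (S : Finset (Fin n)) :
    ∑ i ∈ S, |v i| ≤ topSum v #S := by
  set T := (S.map (absSort v).symm.toEmbedding).map Fin.valEmbedding
  calc ∑ i ∈ S, |v i| = ∑ k ∈ T, absKth v k := by simp [T, absKth_eq_sortedBy]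
    _ ≤ ∑ k ∈ range #T, absKth v k := (absKth_antitone v).sum_le_sum_range_card T
    _ = topSum v #S := by simp [T, topSum]

theorem topSum_add_le (x z : Fin n → ℝ) (p : ℕ) :
    topSum (x + z) p ≤ topSum x p + topSum z p := by
  obtain ⟨S, hS, hsum⟩ := exists_card_le_sum_abs_eq_topSum (x + z) p
  calc topSum (x + z) p = ∑ i ∈ S, |x i + z i| := hsum.symm
    _ ≤ ∑ i ∈ S, |x i| + ∑ i ∈ S, |z i| := by
        rw [← sum_add_distrib]; exact sum_le_sum fun i _ => abs_add_le _ _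
    _ ≤ topSum x #S + topSum z #S := add_le_add (sum_abs_le_topSum x S) (sum_abs_le_topSum z S)
    _ ≤ topSum x p + topSum z p := add_le_add (topSum_mono x hS) (topSum_mono z hS)

theorem topSum_smul (c : ℝ) (x : Fin n → ℝ) (p : ℕ) : topSum (c • x) p = |c| * topSum x p := by
  have hsum (S : Finset (Fin n)) : ∑ i ∈ S, |(c • x) i| = |c| * ∑ i ∈ S, |x i| := by
    simp [mul_sum, abs_mul]
  apply le_antisymm
  · obtain ⟨S, hS, hcx⟩ := exists_card_le_sum_abs_eq_topSum (c • x) p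
    rw [← hcx, hsum]
    gcongr
    exact (sum_abs_le_topSum x S).trans (topSum_mono x hS)
  · obtain ⟨S, hS, hx⟩ := exists_card_le_sum_abs_eq_topSum x p
    rw [← hx, ← hsum]
    exact (sum_abs_le_topSum (c • x) S).trans (topSum_mono _ hS)

theorem absKth_smul (c : ℝ) (x : Fin n → ℝ) (k : ℕ) : absKth (c • x) k = |c| * absKth x k := by
  simp only [absKth_eq_topSum_sub, topSum_smul, mul_sub]

theorem absKth_eq_zero_of_card_le {v : Fin n → ℝ} (S : Finset (Fin n)) (hS : ∀ i ∉ S, v i = 0)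
    {k : ℕ} (hk : #S ≤ k) : absKth v k = 0 := by
  obtain ⟨T, -, hT⟩ := exists_card_le_sum_abs_eq_topSum v (k + 1)
  have hTS : ∑ i ∈ T ∩ S, |v i| = ∑ i ∈ T, |v i| :=
    sum_subset inter_subset_left fun i hiT hi => by simp [hS i (by simp_all)]
  have : topSum v (k + 1) ≤ topSum v k := by
    rw [← hT, ← hTS]
    exact (sum_abs_le_topSum v _).trans
      (topSum_mono v ((card_le_card inter_subset_right).trans hk))
  linarith [absKth_eq_topSum_sub v k, absKth_nonneg v k]

end TopSum

section Slope

variable {n : ℕ} {w : ℕ → ℝ}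

@[simp]
theorem slopeNorm_zero (w : ℕ → ℝ) : slopeNorm w (0 : Fin n → ℝ) = 0 := by
  simp [slopeNorm, absKth, kth]

theorem slopeNorm_smul (w : ℕ → ℝ) (c : ℝ) (x : Fin n → ℝ) :
    slopeNorm w (c • x) = |c| * slopeNorm w x := by
  simp only [slopeNorm, absKth_smul, mul_sum]
  exact sum_congr rfl fun k _ => by ring

theorem slopeNorm_eq_sum_topSum (w : ℕ → ℝ) (x : Fin n → ℝ) :
    slopeNorm w x = ∑ i ∈ range n,
      ((Set.Iio n).indicator w i - (Set.Iio n).indicator w (i + 1)) * topSum x (i + 1) := by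
  have h := sum_range_mul_by_parts ((Set.Iio n).indicator w) (absKth x) n
  rw [Set.indicator_of_notMem (s := Set.Iio n) (lt_irrefl n) w, zero_mul, add_zero] at h
  unfold slopeNorm topSum
  rw [← h]
  exact sum_congr rfl fun k hk => by rw [Set.indicator_of_mem (by simpa using hk)]

theorem slopeNorm_add_le (hw : AntitoneOn w (Set.Iio n)) (hw0 : ∀ k < n, 0 ≤ w k)
    (x z : Fin n → ℝ) : slopeNorm w (x + z) ≤ slopeNorm w x + slopeNorm w z := by
  simp only [slopeNorm_eq_sum_topSum, ← sum_add_distrib, ← mul_add]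
  refine sum_le_sum fun i _ => mul_le_mul_of_nonneg_left (topSum_add_le x z _) ?_
  simp only [Set.indicator, Set.mem_Iio]
  split_ifs with hi hi'
  · exact sub_nonneg.2 (hw hi hi' i.le_succ)
  · simpa using hw0 i hi
  · omega
  · simp

theorem convexOn_slopeNorm (hw : AntitoneOn w (Set.Iio n)) (hw0 : ∀ k < n, 0 ≤ w k) :
    ConvexOn ℝ Set.univ (slopeNorm (n := n) w) :=
  (Seminorm.of (𝕜 := ℝ) (slopeNorm w) (slopeNorm_add_le hw hw0) fun c x => by
    rw [slopeNorm_smul, Real.norm_eq_abs]).convexOn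

theorem slopeNorm_le_sum_range_card (hw0 : ∀ k < n, 0 ≤ w k) {d : Fin n → ℝ}
    (hd : ∀ i, |d i| ≤ 1) (S : Finset (Fin n)) (hS : ∀ i ∉ S, d i = 0) :
    slopeNorm w d ≤ ∑ k ∈ range #S, w k := by
  have hSn : #S ≤ n := by simpa using card_le_univ S
  rw [slopeNorm, ← sum_range_add_sum_Ico _ hSn]
  have htail : ∑ k ∈ Ico #S n, w k * absKth d k = 0 :=
    sum_eq_zero fun k hk => by rw [absKth_eq_zero_of_card_le S hS (mem_Ico.1 hk).1, mul_zero]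
  rw [htail, add_zero]
  refine sum_le_sum fun k hk => ?_
  have hkn : k < n := (mem_range.1 hk).trans_le hSn
  simpa using mul_le_mul_of_nonneg_left (absKth_le_of_forall_abs_le hd zero_le_one k) (hw0 k hkn)

end Slope

section Optimality

theorem le_of_forall_le_add_mul {a b E : ℝ} (h : ∀ t, 0 < t → t ≤ 1 → a ≤ b + t * E) :
    a ≤ b := by
  have hlim : Tendsto (fun t => b + t * E) (𝓝[>] 0) (𝓝 b) := by
    refine ((by fun_prop : Continuous fun t : ℝ => b + t * E).tendsto' 0 b ?_).mono_left
      nhdsWithin_le_nhds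
    simp
  refine ge_of_tendsto hlim ?_
  filter_upwards [Ioc_mem_nhdsGT one_pos] with t ht using h t ht.1 ht.2

theorem vecMul_dotProduct_le_of_forall_le {ι κ : Type*} [Fintype ι] [Fintype κ]
    (A : Matrix ι κ ℝ) (y : ι → ℝ) {J : (κ → ℝ) → ℝ} (hJ : ConvexOn ℝ Set.univ J) {lam : ℝ}
    (hlam : 0 ≤ lam) {x₀ : κ → ℝ}
    (hmin : ∀ x : κ → ℝ, (1 / 2) * ∑ i, (y i - (A *ᵥ x₀) i) ^ 2 + lam * J x₀ ≤
      (1 / 2) * ∑ i, (y i - (A *ᵥ x) i) ^ 2 + lam * J x)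
    (d : κ → ℝ) : ((y - A *ᵥ x₀) ᵥ* A) ⬝ᵥ d ≤ lam * (J (x₀ + d) - J x₀) := by
  set r := y - A *ᵥ x₀
  set e := A *ᵥ d
  rw [← dotProduct_mulVec]
  refine le_of_forall_le_add_mul (E := e ⬝ᵥ e / 2) fun t ht ht1 => ?_
  have hconv : J (x₀ + t • d) ≤ (1 - t) * J x₀ + t * J (x₀ + d) := by
    have hx : x₀ + t • d = (1 - t) • x₀ + t • (x₀ + d) := by module
    rw [hx]
    simpa only [smul_eq_mul] using
      hJ.2 (Set.mem_univ x₀) (Set.mem_univ (x₀ + d)) (sub_nonneg.2 ht1) ht.le (by ring)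
  have hquad : ∑ i, (y i - (A *ᵥ (x₀ + t • d)) i) ^ 2 =
      ∑ i, (y i - (A *ᵥ x₀) i) ^ 2 - 2 * t * (r ⬝ᵥ e) + t ^ 2 * (e ⬝ᵥ e) := by
    simp only [dotProduct, mul_sum, ← sum_sub_distrib, ← sum_add_distrib]
    refine sum_congr rfl fun i _ => ?_
    simp only [mulVec_add, mulVec_smul, r, e, Pi.add_apply, Pi.sub_apply, Pi.smul_apply,
      smul_eq_mul]
    ring
  have key : t * (r ⬝ᵥ e) ≤ t * (lam * (J (x₀ + d) - J x₀) + t * (e ⬝ᵥ e / 2)) := by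
    nlinarith [hmin (x₀ + t • d), mul_le_mul_of_nonneg_left hconv hlam]
  exact le_of_mul_le_mul_left key ht

end Optimality

section Subdifferential

variable {n : ℕ} {w : ℕ → ℝ}

theorem topSum_le_of_forall_dotProduct_le (hw0 : ∀ k < n, 0 ≤ w k) {g : Fin n → ℝ} {c : ℝ}
    (hc : 0 ≤ c) (h : ∀ d, g ⬝ᵥ d ≤ c * slopeNorm w d) {p : ℕ} (hp : p ≤ n) :
    topSum g p ≤ c * ∑ k ∈ range p, w k := by
  set S := sortedPrefix (absSort g) p
  set d : Fin n → ℝ := fun i => if i ∈ S then (SignType.sign (g i) : ℝ) else 0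
  have hgd : g ⬝ᵥ d = topSum g p := by
    rw [← sum_sortedPrefix_absSort, dotProduct, ← sum_subset (subset_univ S)]
    · exact sum_congr rfl fun i hi => by simp [d, S, hi]
    · exact fun i _ hi => by simp [d, hi]
  have hd : ∀ i, |d i| ≤ 1 := fun i => by
    simp only [d]
    split_ifs
    · rcases SignType.sign (g i) with _ | _ | _ <;> simp
    · simp
  have hJd : slopeNorm w d ≤ ∑ k ∈ range p, w k := by
    simpa [card_sortedPrefix, S, hp] using
      slopeNorm_le_sum_range_card hw0 hd S fun i hi => if_neg hi
  calc topSum g p = g ⬝ᵥ d := hgd.symm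
    _ ≤ c * slopeNorm w d := h d
    _ ≤ c * ∑ k ∈ range p, w k := mul_le_mul_of_nonneg_left hJd hc

theorem exists_sum_abs_eq_of_slopeNorm_le_dotProduct {x g : Fin n → ℝ} {c : ℝ}
    (hdual : ∀ p ≤ n, topSum g p ≤ c * ∑ k ∈ range p, w k)
    (hx : c * slopeNorm w x ≤ g ⬝ᵥ x) {ℓ : Fin n} (hℓ : x ℓ ≠ 0) :
    ∃ p < n, ∃ X : Finset (Fin n), ℓ ∈ X ∧ #X = p + 1 ∧
      ∑ i ∈ X, |g i| = c * ∑ k ∈ range (p + 1), w k := by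
  set τ := absSort x
  have hbℓ : absKth x (τ.symm ℓ) = |x ℓ| := by simp [absKth_eq_sortedBy, τ]
  obtain ⟨p, hℓp, hpn, hdrop⟩ := exists_succ_lt_of_lt (b := absKth x) (τ.symm ℓ).isLt.le
    (by rw [absKth_of_le x le_rfl, hbℓ]; positivity)
  have hcd : ∀ q ≤ n, ∑ k ∈ range q, sortedBy τ (fun i => |g i|) k ≤
      ∑ k ∈ range q, c * w k := fun q hq => by
    rw [← sum_sortedPrefix, ← mul_sum]
    refine (sum_abs_le_topSum g _).trans ?_
    simpa [card_sortedPrefix, hq] using hdual q hq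
  have hbd : ∑ k ∈ range n, absKth x k * (c * w k) ≤
      ∑ k ∈ range n, absKth x k * sortedBy τ (fun i => |g i|) k := by
    calc ∑ k ∈ range n, absKth x k * (c * w k) = c * slopeNorm w x := by
          simp only [slopeNorm, mul_sum]; exact sum_congr rfl fun k _ => by ring
      _ ≤ ∑ i, |x i| * |g i| := hx.trans (sum_le_sum fun i _ => by
          rw [mul_comm, ← abs_mul]; exact le_abs_self _)
      _ = _ := sum_mul_eq_sum_range_sortedBy τ _ _
  refine ⟨p, hpn, sortedPrefix τ (p + 1), mem_sortedPrefix.2 (by omega),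
    by simpa [card_sortedPrefix] using hpn, ?_⟩
  rw [sum_sortedPrefix, mul_sum]
  exact sum_range_succ_eq_of_sum_mul_le (absKth_antitone x) (absKth_of_le x le_rfl) hcd hbd
    hpn hdrop

end Subdifferential

section Drop

theorem dropIdx_eq_comp_succAbove {k : ℕ} (ℓ : Fin (k + 1)) (v : Fin (k + 1) → ℝ) :
    dropIdx ℓ v = v ∘ ℓ.succAbove := by
  funext j
  simp only [dropIdx, Function.comp, Fin.succAbove, Fin.lt_def, Fin.val_castSucc]
  split_ifs <;> rfl

variable {n : ℕ}

theorem abs_add_topSum_dropIdx_le (ℓ : Fin n) (v : Fin n → ℝ) (p : ℕ) :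
    |v ℓ| + topSum (dropIdx ℓ v) p ≤ topSum v (p + 1) := by
  cases n with
  | zero => exact ℓ.elim0
  | succ k =>
    rw [dropIdx_eq_comp_succAbove]
    obtain ⟨S, hS, hsum⟩ := exists_card_le_sum_abs_eq_topSum (v ∘ ℓ.succAbove) p
    have hℓ : ℓ ∉ S.map ℓ.succAboveEmb := by simp [Fin.succAbove_ne]
    calc |v ℓ| + topSum (v ∘ ℓ.succAbove) p = ∑ i ∈ (S.map ℓ.succAboveEmb).cons ℓ hℓ, |v i| := by
          rw [sum_cons, sum_map, ← hsum]; rfl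
      _ ≤ topSum v (#S + 1) := by simpa using sum_abs_le_topSum v ((S.map ℓ.succAboveEmb).cons ℓ hℓ)
      _ ≤ topSum v (p + 1) := topSum_mono v (by omega)

theorem sum_abs_le_abs_add_topSum_dropIdx {ℓ : Fin n} {X : Finset (Fin n)} (hℓ : ℓ ∈ X)
    (v : Fin n → ℝ) : ∑ i ∈ X, |v i| ≤ |v ℓ| + topSum (dropIdx ℓ v) (#X - 1) := by
  cases n with
  | zero => exact ℓ.elim0
  | succ k =>
    rw [dropIdx_eq_comp_succAbove, ← add_sum_erase X _ hℓ]
    obtain ⟨T, hT⟩ : ∃ T : Finset (Fin k), T.image ℓ.succAbove = X.erase ℓ :=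
      subset_univ_image_iff.1 fun i hi =>
        have ⟨j, hj⟩ := Fin.exists_succAbove_eq (ne_of_mem_erase hi)
        mem_image.2 ⟨j, mem_univ j, hj⟩
    have hinj := Fin.succAbove_right_injective (p := ℓ)
    rw [← hT, sum_image hinj.injOn, ← card_erase_of_mem hℓ, ← hT,
      card_image_of_injective T hinj]
    exact add_le_add le_rfl (sum_abs_le_topSum (v ∘ ℓ.succAbove) T)

end Drop

theorem nonzero_implies_equality_general {m n : ℕ}
    (A : Matrix (Fin m) (Fin n) ℝ) (y : Fin m → ℝ)
    (w : ℕ → ℝ)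
    (hwa : ∀ i j : ℕ, i ≤ j → j < n → w j ≤ w i) (hwn : 0 ≤ w (n - 1))
    (lam : ℝ) (hlam : 0 < lam)
    (xstar : Fin n → ℝ)
    (hmin : ∀ x : Fin n → ℝ,
        (1 / 2) * ∑ i, (y i - (A *ᵥ xstar) i) ^ 2 + lam * slopeNorm w xstar ≤
        (1 / 2) * ∑ i, (y i - (A *ᵥ x) i) ^ 2 + lam * slopeNorm w x)
    (ustar : Fin m → ℝ) (hu : ustar = y - A *ᵥ xstar)
    (ℓ : Fin n) (hx : xstar ℓ ≠ 0) :
    ∃ q < n, |∑ i, A i ℓ * ustar i| +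
      ∑ k ∈ Finset.range q, absKth (dropIdx ℓ (fun j => ∑ i, A i j * ustar i)) k =
      lam * ∑ k ∈ Finset.range (q + 1), w k := by
  have hw : AntitoneOn w (Set.Iio n) := fun i _ j hj hij => hwa i j hij hj
  have hw0 : ∀ k < n, 0 ≤ w k := fun k hk => hwn.trans (hwa k (n - 1) (by omega) (by omega))
  set g : Fin n → ℝ := fun j => ∑ i, A i j * ustar i
  have hsub (d : Fin n → ℝ) : g ⬝ᵥ d ≤ lam * (slopeNorm w (xstar + d) - slopeNorm w xstar) := by
    convert vecMul_dotProduct_le_of_forall_le A y (convexOn_slopeNorm hw hw0) hlam.le hmin d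
    ext j
    simp [g, hu, vecMul, dotProduct, mul_comm]
  have hdual : ∀ p ≤ n, topSum g p ≤ lam * ∑ k ∈ range p, w k :=
    fun p => topSum_le_of_forall_dotProduct_le hw0 hlam.le fun d => (hsub d).trans
      (mul_le_mul_of_nonneg_left (by linarith [slopeNorm_add_le hw hw0 xstar d]) hlam.le)
  have hsupp : lam * slopeNorm w xstar ≤ g ⬝ᵥ xstar := by
    have := hsub (-xstar)
    simp only [add_neg_cancel, slopeNorm_zero, dotProduct_neg] at this
    linarith
  obtain ⟨p, hpn, X, hℓX, hX, hXsum⟩ := exists_sum_abs_eq_of_slopeNorm_le_dotProduct hdual hsupp hx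
  change ∃ q < n, |g ℓ| + topSum (dropIdx ℓ g) q = lam * ∑ k ∈ range (q + 1), w k
  refine ⟨p, hpn, le_antisymm ?_ ?_⟩
  · exact (abs_add_topSum_dropIdx_le ℓ g p).trans (hdual (p + 1) hpn)
  · simpa [hX, hXsum] using sum_abs_le_abs_add_topSum_dropIdx hℓX g

theorem nonzero_implies_equality {m n : ℕ} (hn : 0 < n)
    (A : Matrix (Fin m) (Fin n) ℝ) (y : Fin m → ℝ)
    (w : ℕ → ℝ) (hw0 : 0 < w 0)
    (hwa : ∀ i j : ℕ, i ≤ j → j < n → w j ≤ w i) (hwn : 0 ≤ w (n - 1))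
    (lam : ℝ) (hlam : 0 < lam)
    (xstar : Fin n → ℝ)
    (hmin : ∀ x : Fin n → ℝ,
        (1 / 2) * ∑ i, (y i - (A *ᵥ xstar) i) ^ 2 + lam * slopeNorm w xstar ≤
        (1 / 2) * ∑ i, (y i - (A *ᵥ x) i) ^ 2 + lam * slopeNorm w x)
    (ustar : Fin m → ℝ) (hu : ustar = y - A *ᵥ xstar)
    (ℓ : Fin n) (hx : xstar ℓ ≠ 0) :
    ∃ q < n, |∑ i, A i ℓ * ustar i| +
      ∑ k ∈ Finset.range q, absKth (dropIdx ℓ (fun j => ∑ i, A i j * ustar i)) k =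
      lam * ∑ k ∈ Finset.range (q + 1), w k :=
  nonzero_implies_equality_general A y w hwa hwn lam hlam xstar hmin ustar hu ℓ hx
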